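/- arXiv:2404.05754 — 4 statements merged into one kernel-verified Lean document; each statement's English description precedes it below -/
import Mathlib

section
/- Let (X, ‖·‖) be a quasi-normed vector space with quasi-triangle constant C ≥ 1. If {x_n} is a sequence in X such that there exists γ ∈ [0,1) with ‖x_{n+1} − x_n‖ ≤ γ‖x_n − x_{n−1}‖ for all n ≥ 1, then {x_n} is a Cauchy sequence (with respect to the quasi-metric d(x,y) = ‖x − y‖). -/
/-!
Chaining the quasi-triangle inequality over `k` steps weights the `i`-th step by `C^(i+1)`, which a
ratio `γ` with `Cγ ≥ 1` cannot absorb. A block of `s` steps costs only the fixed factor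
`∑_{i<s} C^(i+1)`, while block differences decay with ratio `γ^s`; for `s` with `Cγ^s ≤ 1/2`
the chain of blocks is summable, so `‖x (n + k) - x n‖ ≤ M γ^n` uniformly in `k`.
-/

open Finset Filter Topology

section QuasiNorm

variable {X : Type*} [AddCommGroup X] (Nm : X → ℝ) {C : ℝ}

theorem quasiNorm_sub_le_sum_pow_mul (hC : 0 ≤ C)
    (h2 : ∀ x y, Nm (x + y) ≤ C * (Nm x + Nm y)) (hNm0 : Nm 0 = 0) (y : ℕ → X) (k : ℕ) :
    Nm (y k - y 0) ≤ ∑ i ∈ range k, C ^ (i + 1) * Nm (y (i + 1) - y i) := by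
  induction k generalizing y with
  | zero => simp [hNm0]
  | succ k ih =>
    have hsplit : y (k + 1) - y 0 = (y 1 - y 0) + (y (k + 1) - y 1) := by abel
    calc Nm (y (k + 1) - y 0)
        ≤ C * (Nm (y 1 - y 0) + Nm (y (k + 1) - y 1)) := hsplit ▸ h2 _ _
      _ ≤ C * (Nm (y 1 - y 0) + ∑ i ∈ range k, C ^ (i + 1) * Nm (y (i + 2) - y (i + 1))) := by
        gcongr
        exact ih (fun i => y (i + 1))
      _ = ∑ i ∈ range (k + 1), C ^ (i + 1) * Nm (y (i + 1) - y i) := by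
        rw [sum_range_succ', mul_add, mul_sum]
        simp only [pow_succ]
        ring_nf

theorem quasiNorm_sub_le_of_forall_le (hC : 0 ≤ C)
    (h2 : ∀ x y, Nm (x + y) ≤ C * (Nm x + Nm y)) (hNm0 : Nm 0 = 0) (y : ℕ → X) {B : ℝ}
    (hy : ∀ i, Nm (y (i + 1) - y i) ≤ B) (k : ℕ) :
    Nm (y k - y 0) ≤ (∑ i ∈ range k, C ^ (i + 1)) * B := by
  rw [sum_mul]
  exact (quasiNorm_sub_le_sum_pow_mul Nm hC h2 hNm0 y k).trans
    (sum_le_sum fun i _ => by gcongr; exact hy i)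

theorem quasiNorm_sub_le_of_geometric (hC : 0 ≤ C)
    (h2 : ∀ x y, Nm (x + y) ≤ C * (Nm x + Nm y)) (hNm0 : Nm 0 = 0) (y : ℕ → X) {B q : ℝ}
    (hB : 0 ≤ B) (hq : 0 ≤ q) (hCq : C * q ≤ 1 / 2)
    (hy : ∀ i, Nm (y (i + 1) - y i) ≤ B * q ^ i) (k : ℕ) :
    Nm (y k - y 0) ≤ 2 * C * B := by
  calc Nm (y k - y 0) ≤ ∑ i ∈ range k, C ^ (i + 1) * (B * q ^ i) :=
        (quasiNorm_sub_le_sum_pow_mul Nm hC h2 hNm0 y k).trans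
          (sum_le_sum fun i _ => by gcongr; exact hy i)
    _ = C * B * ∑ i ∈ range k, (C * q) ^ i := by
        rw [mul_sum]
        exact sum_congr rfl fun i _ => by ring
    _ ≤ C * B * ∑ i ∈ range k, (1 / 2 : ℝ) ^ i := by gcongr
    _ ≤ C * B * 2 := by gcongr; exact sum_geometric_two_le k
    _ = 2 * C * B := by ring

theorem exists_quasiNorm_sub_le_of_geometric (hC : 0 ≤ C)
    (h2 : ∀ x y, Nm (x + y) ≤ C * (Nm x + Nm y)) (hNm0 : Nm 0 = 0) {γ : ℝ} (hγ0 : 0 ≤ γ)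
    (hγ1 : γ < 1) :
    ∃ M : ℝ, ∀ (y : ℕ → X) (B : ℝ), 0 ≤ B → (∀ i, Nm (y (i + 1) - y i) ≤ B * γ ^ i) →
      ∀ k, Nm (y k - y 0) ≤ M * B := by
  have hsmall : ∀ᶠ s in atTop, C * γ ^ s < 1 / 2 := by
    have := (tendsto_pow_atTop_nhds_zero_of_lt_one hγ0 hγ1).const_mul C
    rw [mul_zero] at this
    exact this.eventually (gt_mem_nhds (by norm_num))
  obtain ⟨s, hs, hs1⟩ := (hsmall.and (eventually_ge_atTop 1)).exists
  set K := ∑ i ∈ range s, C ^ (i + 1)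
  have hK : 0 ≤ K := sum_nonneg fun i _ => by positivity
  refine ⟨C * (K + 2 * C * K), fun y B hB hy k => ?_⟩
  have hγs : ∀ n i, B * γ ^ (n + i) ≤ B * γ ^ n := fun n i =>
    mul_le_mul_of_nonneg_left (pow_le_pow_of_le_one hγ0 hγ1.le (Nat.le_add_right n i)) hB
  have hblock : ∀ j, Nm (y ((j + 1) * s) - y (j * s)) ≤ K * B * (γ ^ s) ^ j := by
    intro j
    have := quasiNorm_sub_le_of_forall_le Nm hC h2 hNm0 (fun i => y (j * s + i))
      (fun i => by simp only [← add_assoc]; exact (hy _).trans (hγs _ i)) s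
    rw [← pow_mul, mul_comm s j, mul_assoc]
    simpa [add_mul] using this
  have hlong : Nm (y (k / s * s) - y 0) ≤ 2 * C * (K * B) := by
    simpa using quasiNorm_sub_le_of_geometric Nm hC h2 hNm0 (fun j => y (j * s))
      (by positivity) (by positivity) hs.le hblock (k / s)
  have hrem : Nm (y k - y (k / s * s)) ≤ K * B := by
    have := quasiNorm_sub_le_of_forall_le Nm hC h2 hNm0 (fun i => y (k / s * s + i))
      (fun i => by
        simp only [← add_assoc]
        exact (hy _).trans ((hγs _ i).trans (by simpa using hγs 0 _))) (k % s)
    simp only [add_zero, Nat.div_add_mod'] at this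
    refine this.trans (mul_le_mul_of_nonneg_right ?_ hB)
    exact sum_le_sum_of_subset_of_nonneg (range_subset_range.mpr (Nat.mod_lt k hs1).le)
      fun i _ _ => by positivity
  calc Nm (y k - y 0) ≤ C * (Nm (y k - y (k / s * s)) + Nm (y (k / s * s) - y 0)) := by
        simpa using h2 (y k - y (k / s * s)) (y (k / s * s) - y 0)
    _ ≤ C * (K * B + 2 * C * (K * B)) := by gcongr
    _ = C * (K + 2 * C * K) * B := by ring

theorem quasiNorm_sub_succ_le_pow_mul {γ : ℝ} (hγ0 : 0 ≤ γ) (x : ℕ → X)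
    (hrec : ∀ n : ℕ, 1 ≤ n → Nm (x (n + 1) - x n) ≤ γ * Nm (x n - x (n - 1))) (k : ℕ) :
    Nm (x (k + 1) - x k) ≤ Nm (x 1 - x 0) * γ ^ k := by
  induction k with
  | zero => simp
  | succ k ih =>
    calc Nm (x (k + 2) - x (k + 1)) ≤ γ * Nm (x (k + 1) - x k) := hrec (k + 1) (by omega)
      _ ≤ γ * (Nm (x 1 - x 0) * γ ^ k) := by gcongr
      _ = Nm (x 1 - x 0) * γ ^ (k + 1) := by ring

theorem quasiNorm_cauchy_of_le (hneg : ∀ v, Nm (-v) = Nm v) (x : ℕ → X) {b : ℕ → ℝ}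
    (hb : Tendsto b atTop (𝓝 0)) (hx : ∀ n k, Nm (x (n + k) - x n) ≤ b n) :
    ∀ ε > 0, ∃ N : ℕ, ∀ m ≥ N, ∀ n ≥ N, Nm (x m - x n) < ε := by
  intro ε hε
  obtain ⟨N, hN⟩ := eventually_atTop.mp (hb.eventually (gt_mem_nhds hε))
  have hle : ∀ n m, N ≤ n → n ≤ m → Nm (x m - x n) < ε := fun n m hn hnm => by
    obtain ⟨k, rfl⟩ := Nat.exists_eq_add_of_le hnm
    exact (hx n k).trans_lt (hN n hn)
  refine ⟨N, fun m hm n hn => ?_⟩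
  rcases le_total n m with h | h
  · exact hle n m hn h
  · rw [← neg_sub, hneg]
    exact hle m n hm h

end QuasiNorm

theorem stmt_0_general {X : Type*} [AddCommGroup X] [Module ℝ X] (Nm : X → ℝ) (C : ℝ)
    (hC : 1 ≤ C)
    (hnn : ∀ x, 0 ≤ Nm x)
    (h1 : ∀ (r : ℝ) (x : X), Nm (r • x) = |r| * Nm x)
    (h2 : ∀ x y, Nm (x + y) ≤ C * (Nm x + Nm y))
    (x : ℕ → X) (γ : ℝ) (hγ0 : 0 ≤ γ) (hγ1 : γ < 1)
    (hrec : ∀ n : ℕ, 1 ≤ n → Nm (x (n + 1) - x n) ≤ γ * Nm (x n - x (n - 1))) :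
    ∀ ε > 0, ∃ N : ℕ, ∀ m ≥ N, ∀ n ≥ N, Nm (x m - x n) < ε := by
  have hNm0 : Nm 0 = 0 := by simpa using h1 0 0
  have hneg : ∀ v, Nm (-v) = Nm v := fun v => by simpa using h1 (-1) v
  set A := Nm (x 1 - x 0)
  obtain ⟨M, hM⟩ := exists_quasiNorm_sub_le_of_geometric Nm (by linarith) h2 hNm0 hγ0 hγ1
  have hbound : ∀ n k, Nm (x (n + k) - x n) ≤ M * A * γ ^ n := fun n k => by
    have hstep : ∀ i, Nm (x (n + (i + 1)) - x (n + i)) ≤ A * γ ^ n * γ ^ i := fun i => by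
      simpa [← add_assoc, pow_add, mul_assoc] using
        quasiNorm_sub_succ_le_pow_mul Nm hγ0 x hrec (n + i)
    have hB : 0 ≤ A * γ ^ n := mul_nonneg (hnn _) (pow_nonneg hγ0 n)
    simpa [mul_assoc] using hM (fun i => x (n + i)) (A * γ ^ n) hB hstep k
  have hlim : Tendsto (fun n => M * A * γ ^ n) atTop (𝓝 0) := by
    simpa using (tendsto_pow_atTop_nhds_zero_of_lt_one hγ0 hγ1).const_mul (M * A)
  exact quasiNorm_cauchy_of_le Nm hneg x hlim hbound

/-- In a quasi-normed vector space, a sequence with geometrically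
contracting consecutive differences is Cauchy w.r.t. the quasi-metric. -/
theorem stmt_0 {X : Type*} [AddCommGroup X] [Module ℝ X] (Nm : X → ℝ) (C : ℝ)
    (hC : 1 ≤ C)
    (hnn : ∀ x, 0 ≤ Nm x)
    (h0 : ∀ x, Nm x = 0 ↔ x = 0)
    (h1 : ∀ (r : ℝ) (x : X), Nm (r • x) = |r| * Nm x)
    (h2 : ∀ x y, Nm (x + y) ≤ C * (Nm x + Nm y))
    (x : ℕ → X) (γ : ℝ) (hγ0 : 0 ≤ γ) (hγ1 : γ < 1)
    (hrec : ∀ n : ℕ, 1 ≤ n → Nm (x (n + 1) - x n) ≤ γ * Nm (x n - x (n - 1))) :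
    ∀ ε > 0, ∃ N : ℕ, ∀ m ≥ N, ∀ n ≥ N, Nm (x m - x n) < ε :=
  stmt_0_general Nm C hC hnn h1 h2 x γ hγ0 hγ1 hrec
end

section
/- Let (X, ‖·‖) be a quasi-normed space and T : X → X a (b,θ)-enriched contraction with b > 0. Set λ = 1/(b+1) and let T_λ x = (1−λ)x + λTx. Then T_λ is a Banach contraction with contraction coefficient c = λθ ∈ [0,1), that is, ‖T_λ x − T_λ y‖ ≤ c‖x−y‖ for all x, y ∈ X. -/
/-! With `λ = 1/(b+1)` one has `1 - λ = λ b`, so `T_λ x - T_λ y = λ • (b • (x - y) + (T x - T y))`;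
absolute homogeneity of the quasi-norm and the enriched contraction inequality give the bound `λ θ`,
and `θ < b + 1` makes it less than one. -/

theorem averaged_sub_eq_smul_enriched {K V : Type*} [Field K] [AddCommGroup V] [Module K V]
    {b : K} (hb : b + 1 ≠ 0) (x y u v : V) :
    ((1 - 1 / (b + 1)) • x + (1 / (b + 1)) • u) - ((1 - 1 / (b + 1)) • y + (1 / (b + 1)) • v) =
      (1 / (b + 1)) • (b • (x - y) + (u - v)) := by
  have hcoeff : 1 - 1 / (b + 1) = 1 / (b + 1) * b := by field_simp; ring
  rw [hcoeff, smul_add, smul_smul]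
  module

theorem enriched_coefficient_mem_Ico {b θ : ℝ} (hθ0 : 0 ≤ θ) (hθ : θ < b + 1) :
    0 ≤ 1 / (b + 1) * θ ∧ 1 / (b + 1) * θ < 1 := by
  have hb1 : 0 < b + 1 := hθ0.trans_lt hθ
  refine ⟨by positivity, ?_⟩
  rwa [one_div_mul_eq_div, div_lt_one hb1]

theorem stmt_5_general {X : Type*} [AddCommGroup X] [Module ℝ X] (Nm : X → ℝ)
    (h1 : ∀ (r : ℝ) (x : X), Nm (r • x) = |r| * Nm x)
    (T : X → X) (b θ : ℝ) (hθ0 : 0 ≤ θ) (hθ : θ < b + 1)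
    (hT : ∀ x y, Nm (b • (x - y) + (T x - T y)) ≤ θ * Nm (x - y)) :
    (0 ≤ (1 / (b + 1)) * θ ∧ (1 / (b + 1)) * θ < 1) ∧
    ∀ x y : X,
      Nm (((1 - 1 / (b + 1)) • x + (1 / (b + 1)) • T x) -
          ((1 - 1 / (b + 1)) • y + (1 / (b + 1)) • T y)) ≤
        ((1 / (b + 1)) * θ) * Nm (x - y) := by
  have hb1 : 0 < b + 1 := hθ0.trans_lt hθ
  have hlam : 0 < 1 / (b + 1) := by positivity
  refine ⟨enriched_coefficient_mem_Ico hθ0 hθ, fun x y => ?_⟩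
  rw [averaged_sub_eq_smul_enriched hb1.ne', h1, abs_of_pos hlam, mul_assoc]
  exact mul_le_mul_of_nonneg_left (hT x y) hlam.le

/-- if T is a (b,θ)-enriched contraction with b > 0 then, with
λ = 1/(b+1) and c = λθ, the averaged map T_λ is a c-contraction and c ∈ [0,1). -/
theorem stmt_5 {X : Type*} [AddCommGroup X] [Module ℝ X] (Nm : X → ℝ) (C : ℝ)
    (hC : 1 ≤ C)
    (hnn : ∀ x, 0 ≤ Nm x)
    (h0 : ∀ x, Nm x = 0 ↔ x = 0)
    (h1 : ∀ (r : ℝ) (x : X), Nm (r • x) = |r| * Nm x)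
    (h2 : ∀ x y, Nm (x + y) ≤ C * (Nm x + Nm y))
    (T : X → X) (b θ : ℝ) (hb : 0 < b) (hθ0 : 0 ≤ θ) (hθ : θ < b + 1)
    (hT : ∀ x y, Nm (b • (x - y) + (T x - T y)) ≤ θ * Nm (x - y)) :
    (0 ≤ (1 / (b + 1)) * θ ∧ (1 / (b + 1)) * θ < 1) ∧
    ∀ x y : X,
      Nm (((1 - 1 / (b + 1)) • x + (1 / (b + 1)) • T x) -
          ((1 - 1 / (b + 1)) • y + (1 / (b + 1)) • T y)) ≤
        ((1 / (b + 1)) * θ) * Nm (x - y) :=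
  stmt_5_general Nm h1 T b θ hθ0 hθ hT
end

section
/- Let (X, ‖·‖) be a quasi-Banach space and T : X → X a (b,θ)-enriched contraction. Then T has a unique fixed point p, i.e., Fix(T) = {p}. -/
/-!
The averaged map `S x = (b + 1)⁻¹ • (b • x + T x)` has the same fixed points as `T` and is a
contraction with constant `k = θ / (b + 1) < 1`, so it suffices to prove Banach's principle for
quasi-metrics. There, two applications of the quasi-triangle inequality give
`(1 - C² k) d(x, y) ≤ C d(x, S x) + C² d(y, S y)`, which makes every Picard orbit Cauchy as soon
as `C² k < 1`. This is arranged by replacing `S` with an iterate `S^[N]`; the fixed point of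
`S^[N]` is then fixed by `S` because `S` maps it to another fixed point of `S^[N]`.
-/

open Filter Topology Function

/-- A `b`-metric with constant `C`. -/
structure IsQuasiMetric {X : Type*} (d : X → X → ℝ) (C : ℝ) : Prop where
  one_le : 1 ≤ C
  nonneg : ∀ x y, 0 ≤ d x y
  eq_zero_iff : ∀ x y, d x y = 0 ↔ x = y
  symm : ∀ x y, d x y = d y x
  le_mul_add : ∀ x y z, d x z ≤ C * (d x y + d y z)

theorem isQuasiMetric_sub {X : Type*} [AddCommGroup X] [Module ℝ X] {Nm : X → ℝ} {C : ℝ}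
    (hC : 1 ≤ C) (hnn : ∀ x, 0 ≤ Nm x) (h0 : ∀ x, Nm x = 0 ↔ x = 0)
    (h1 : ∀ (r : ℝ) (x : X), Nm (r • x) = |r| * Nm x)
    (h2 : ∀ x y, Nm (x + y) ≤ C * (Nm x + Nm y)) :
    IsQuasiMetric (fun x y => Nm (x - y)) C where
  one_le := hC
  nonneg _ _ := hnn _
  eq_zero_iff _ _ := (h0 _).trans sub_eq_zero
  symm x y := by simpa using h1 (-1) (y - x)
  le_mul_add x y z := by simpa using h2 (x - y) (y - z)

theorem iterate_le_pow_mul {X : Type*} {d : X → X → ℝ} {k : ℝ} {S : X → X} (hk : 0 ≤ k)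
    (hS : ∀ x y, d (S x) (S y) ≤ k * d x y) (n : ℕ) (x y : X) :
    d (S^[n] x) (S^[n] y) ≤ k ^ n * d x y := by
  induction n generalizing x y with
  | zero => simp
  | succ n ih =>
    rw [iterate_succ_apply, iterate_succ_apply, pow_succ, mul_assoc]
    exact (ih _ _).trans (mul_le_mul_of_nonneg_left (hS x y) (pow_nonneg hk n))

namespace IsQuasiMetric

variable {X : Type*} {d : X → X → ℝ} {C k : ℝ} {S : X → X}

theorem eq_of_isFixedPt (hd : IsQuasiMetric d C) (hk : k < 1)
    (hS : ∀ x y, d (S x) (S y) ≤ k * d x y) {x y : X} (hx : IsFixedPt S x)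
    (hy : IsFixedPt S y) : x = y := by
  have h := hS x y
  rw [hx.eq, hy.eq] at h
  exact (hd.eq_zero_iff x y).1 (by nlinarith [hd.nonneg x y])

theorem one_sub_mul_le (hd : IsQuasiMetric d C) (hS : ∀ x y, d (S x) (S y) ≤ k * d x y)
    (x y : X) : (1 - C ^ 2 * k) * d x y ≤ C * d x (S x) + C ^ 2 * d y (S y) := by
  have hC : 0 ≤ C := zero_le_one.trans hd.one_le
  have h := calc
    d x y ≤ C * (d x (S x) + d (S x) y) := hd.le_mul_add _ _ _
    _ ≤ C * (d x (S x) + C * (d (S x) (S y) + d (S y) y)) := by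
      gcongr; exact hd.le_mul_add _ _ _
    _ ≤ C * (d x (S x) + C * (k * d x y + d y (S y))) := by
      rw [hd.symm (S y) y]; gcongr; exact hS x y
  linarith

theorem cauchy_iterate (hd : IsQuasiMetric d C) (hk : 0 ≤ k) (hCk : C ^ 2 * k < 1)
    (hS : ∀ x y, d (S x) (S y) ≤ k * d x y) (x₀ : X) :
    ∀ ε > 0, ∃ N : ℕ, ∀ m ≥ N, ∀ n ≥ N, d (S^[m] x₀) (S^[n] x₀) < ε := by
  have hC : 0 < C := zero_lt_one.trans_le hd.one_le
  have hk1 : k < 1 := by nlinarith [hd.one_le]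
  have hstep : Tendsto (fun n => d (S^[n] x₀) (S (S^[n] x₀))) atTop (𝓝 0) := by
    refine squeeze_zero (fun n => hd.nonneg _ _) (fun n => ?_)
      (by simpa using (tendsto_pow_atTop_nhds_zero_of_lt_one hk hk1).mul_const (d x₀ (S x₀)))
    rw [← iterate_succ_apply' S n, iterate_succ_apply]
    exact iterate_le_pow_mul hk hS n _ _
  intro ε hε
  have hgap : 0 < 1 - C ^ 2 * k := by linarith
  set δ := (1 - C ^ 2 * k) * ε / (C + C ^ 2)
  obtain ⟨N, hN⟩ := eventually_atTop.1 (hstep.eventually (gt_mem_nhds (by positivity : 0 < δ)))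
  refine ⟨N, fun m hm n hn => lt_of_mul_lt_mul_left ?_ hgap.le⟩
  calc (1 - C ^ 2 * k) * d (S^[m] x₀) (S^[n] x₀)
      ≤ C * d (S^[m] x₀) (S (S^[m] x₀)) + C ^ 2 * d (S^[n] x₀) (S (S^[n] x₀)) :=
        hd.one_sub_mul_le hS _ _
    _ < C * δ + C ^ 2 * δ := by gcongr <;> [exact hN m hm; exact hN n hn]
    _ = (1 - C ^ 2 * k) * ε := by simp only [δ]; field_simp

theorem isFixedPt_of_tendsto (hd : IsQuasiMetric d C) (hS : ∀ x y, d (S x) (S y) ≤ k * d x y)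
    {x₀ l : X} (hl : Tendsto (fun n => d (S^[n] x₀) l) atTop (𝓝 0)) : IsFixedPt S l := by
  have hC : 0 ≤ C := zero_le_one.trans hd.one_le
  have hbound : ∀ n, d l (S l) ≤ C * (d (S^[n + 1] x₀) l + k * d (S^[n] x₀) l) := fun n => calc
    d l (S l) ≤ C * (d l (S^[n + 1] x₀) + d (S^[n + 1] x₀) (S l)) := hd.le_mul_add _ _ _
    _ ≤ C * (d (S^[n + 1] x₀) l + k * d (S^[n] x₀) l) := by
      rw [hd.symm l, iterate_succ_apply']; gcongr; exact hS _ _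
  have hlim : Tendsto (fun n => C * (d (S^[n + 1] x₀) l + k * d (S^[n] x₀) l)) atTop (𝓝 0) := by
    simpa using ((hl.comp (tendsto_add_atTop_nat 1)).add (hl.const_mul k)).const_mul C
  have hzero : d l (S l) = 0 := le_antisymm (ge_of_tendsto' hlim hbound) (hd.nonneg _ _)
  exact ((hd.eq_zero_iff _ _).1 hzero).symm

theorem exists_isFixedPt_of_sq_mul_lt_one [Nonempty X] (hd : IsQuasiMetric d C)
    (hcomplete : ∀ u : ℕ → X, (∀ ε > 0, ∃ N : ℕ, ∀ m ≥ N, ∀ n ≥ N, d (u m) (u n) < ε) →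
      ∃ l : X, Tendsto (fun n => d (u n) l) atTop (𝓝 0))
    (hk : 0 ≤ k) (hCk : C ^ 2 * k < 1) (hS : ∀ x y, d (S x) (S y) ≤ k * d x y) :
    ∃ p, IsFixedPt S p := by
  let x₀ : X := Classical.arbitrary X
  obtain ⟨l, hl⟩ := hcomplete _ (hd.cauchy_iterate hk hCk hS x₀)
  exact ⟨l, hd.isFixedPt_of_tendsto hS hl⟩

theorem existsUnique_isFixedPt [Nonempty X] (hd : IsQuasiMetric d C)
    (hcomplete : ∀ u : ℕ → X, (∀ ε > 0, ∃ N : ℕ, ∀ m ≥ N, ∀ n ≥ N, d (u m) (u n) < ε) →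
      ∃ l : X, Tendsto (fun n => d (u n) l) atTop (𝓝 0))
    (hk0 : 0 ≤ k) (hk1 : k < 1) (hS : ∀ x y, d (S x) (S y) ≤ k * d x y) :
    ∃! p, IsFixedPt S p := by
  have hC2 : 1 ≤ C ^ 2 := one_le_pow₀ hd.one_le
  obtain ⟨N, hN⟩ := exists_pow_lt_of_lt_one (inv_pos.2 (zero_lt_one.trans_le hC2)) hk1
  have hCkN : C ^ 2 * k ^ N < 1 := by
    simpa [mul_inv_cancel₀ (zero_lt_one.trans_le hC2).ne'] using
      mul_lt_mul_of_pos_left hN (zero_lt_one.trans_le hC2)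
  have hkN : k ^ N < 1 := (le_mul_of_one_le_left (pow_nonneg hk0 N) hC2).trans_lt hCkN
  have hSN := iterate_le_pow_mul hk0 hS N
  obtain ⟨p, hp⟩ := hd.exists_isFixedPt_of_sq_mul_lt_one hcomplete (pow_nonneg hk0 N) hCkN hSN
  have hSp : IsFixedPt S p :=
    hd.eq_of_isFixedPt hkN hSN (hp.map (Commute.self_iterate S N)) hp
  exact ⟨p, hSp, fun q hq => hd.eq_of_isFixedPt hk1 hS hq hSp⟩

end IsQuasiMetric

section Averaged

variable {X : Type*} [AddCommGroup X] [Module ℝ X]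

noncomputable def averagedMap (b : ℝ) (T : X → X) (x : X) : X := (b + 1)⁻¹ • (b • x + T x)

theorem isFixedPt_averagedMap_iff {b : ℝ} {T : X → X} {x : X} (hb : b + 1 ≠ 0) :
    IsFixedPt (averagedMap b T) x ↔ IsFixedPt T x := by
  change averagedMap b T x = x ↔ T x = x
  rw [averagedMap, inv_smul_eq_iff₀ hb, add_smul, one_smul, add_right_inj]

theorem quasiNorm_averagedMap_sub_le {Nm : X → ℝ} (h1 : ∀ (r : ℝ) (x : X), Nm (r • x) = |r| * Nm x)
    {T : X → X} {b θ : ℝ} (hb : 0 < b + 1)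
    (hT : ∀ x y, Nm (b • (x - y) + (T x - T y)) ≤ θ * Nm (x - y)) (x y : X) :
    Nm (averagedMap b T x - averagedMap b T y) ≤ θ / (b + 1) * Nm (x - y) := by
  have hsub : averagedMap b T x - averagedMap b T y = (b + 1)⁻¹ • (b • (x - y) + (T x - T y)) := by
    rw [averagedMap, averagedMap, ← smul_sub, smul_sub b]
    congr 1
    abel
  rw [hsub, h1, abs_of_pos (inv_pos.2 hb), div_eq_inv_mul, mul_assoc]
  exact mul_le_mul_of_nonneg_left (hT x y) (inv_nonneg.2 hb.le)

end Averaged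

theorem stmt_6_general {X : Type*} [AddCommGroup X] [Module ℝ X] (Nm : X → ℝ) (C : ℝ)
    (hC : 1 ≤ C)
    (hnn : ∀ x, 0 ≤ Nm x)
    (h0 : ∀ x, Nm x = 0 ↔ x = 0)
    (h1 : ∀ (r : ℝ) (x : X), Nm (r • x) = |r| * Nm x)
    (h2 : ∀ x y, Nm (x + y) ≤ C * (Nm x + Nm y))
    (hcomplete : ∀ u : ℕ → X,
      (∀ ε > 0, ∃ N : ℕ, ∀ m ≥ N, ∀ n ≥ N, Nm (u m - u n) < ε) →
      ∃ l : X, Filter.Tendsto (fun n => Nm (u n - l)) Filter.atTop (nhds 0))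
    (T : X → X) (b θ : ℝ) (hθ0 : 0 ≤ θ) (hθ : θ < b + 1)
    (hT : ∀ x y, Nm (b • (x - y) + (T x - T y)) ≤ θ * Nm (x - y)) :
    ∃! p : X, T p = p := by
  have hb : 0 < b + 1 := hθ0.trans_lt hθ
  obtain ⟨p, hp, huniq⟩ := (isQuasiMetric_sub hC hnn h0 h1 h2).existsUnique_isFixedPt hcomplete
    (div_nonneg hθ0 hb.le) ((div_lt_one hb).2 hθ) (quasiNorm_averagedMap_sub_le h1 hb hT)
  exact ⟨p, (isFixedPt_averagedMap_iff hb.ne').1 hp,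
    fun q hq => huniq q ((isFixedPt_averagedMap_iff hb.ne').2 hq)⟩

/-- a (b,θ)-enriched contraction on a quasi-Banach space has a unique
fixed point. -/
theorem stmt_6 {X : Type*} [AddCommGroup X] [Module ℝ X] (Nm : X → ℝ) (C : ℝ)
    (hC : 1 ≤ C)
    (hnn : ∀ x, 0 ≤ Nm x)
    (h0 : ∀ x, Nm x = 0 ↔ x = 0)
    (h1 : ∀ (r : ℝ) (x : X), Nm (r • x) = |r| * Nm x)
    (h2 : ∀ x y, Nm (x + y) ≤ C * (Nm x + Nm y))
    (hcomplete : ∀ u : ℕ → X,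
      (∀ ε > 0, ∃ N : ℕ, ∀ m ≥ N, ∀ n ≥ N, Nm (u m - u n) < ε) →
      ∃ l : X, Filter.Tendsto (fun n => Nm (u n - l)) Filter.atTop (nhds 0))
    (T : X → X) (b θ : ℝ) (hb : 0 ≤ b) (hθ0 : 0 ≤ θ) (hθ : θ < b + 1)
    (hT : ∀ x y, Nm (b • (x - y) + (T x - T y)) ≤ θ * Nm (x - y)) :
    ∃! p : X, T p = p :=
  stmt_6_general Nm C hC hnn h0 h1 h2 hcomplete T b θ hθ0 hθ hT
end

section
/- On X = ℝ², for fixed a > 0 with a ≠ 1 and p ∈ [1, ∞), define ‖x‖_{a,p} = (|x₁|^p + |x₂|^p)^{1/p} if x₂ ≠ 0, and ‖x‖_{a,p} = a|x₁| if x₂ = 0. Then ‖·‖_{a,p} is a quasi-norm on ℝ² with quasi-triangle constant C = max{a, 1/a}; that is, ‖x‖_{a,p} = 0 iff x = 0, ‖λx‖_{a,p} = |λ|‖x‖_{a,p}, and ‖x+y‖_{a,p} ≤ max{a,1/a}(‖x‖_{a,p} + ‖y‖_{a,p}) for all x, y ∈ ℝ². -/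
private lemma mink2 {p : ℝ} (hp : 1 ≤ p) (x1 x2 y1 y2 : ℝ) :
    (|x1 + y1| ^ p + |x2 + y2| ^ p) ^ (1 / p) ≤
      (|x1| ^ p + |x2| ^ p) ^ (1 / p) + (|y1| ^ p + |y2| ^ p) ^ (1 / p) := by
  have := Real.Lp_add_le (Finset.univ : Finset (Fin 2)) ![x1, x2] ![y1, y2] hp
  simpa [Fin.sum_univ_two] using this

/-- the Maligranda example ‖·‖_{a,p} on ℝ² is a quasi-norm with
quasi-triangle constant max{a, 1/a}. -/
theorem stmt_14 (a p : ℝ) (ha0 : 0 < a) (ha1 : a ≠ 1) (hp : 1 ≤ p)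
    (Nm : ℝ × ℝ → ℝ)
    (hNm : ∀ x : ℝ × ℝ,
      Nm x = if x.2 ≠ 0 then (|x.1| ^ p + |x.2| ^ p) ^ (1 / p) else a * |x.1|) :
    (∀ x : ℝ × ℝ, Nm x = 0 ↔ x = 0) ∧
    (∀ (r : ℝ) (x : ℝ × ℝ), Nm (r • x) = |r| * Nm x) ∧
    (∀ x y : ℝ × ℝ, Nm (x + y) ≤ max a a⁻¹ * (Nm x + Nm y)) := by
  have hp0 : (0 : ℝ) < p := lt_of_lt_of_le one_pos hp
  have hpne : p ≠ 0 := ne_of_gt hp0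
  -- auxiliary: (|t|^p)^(1/p) = |t|
  have habs : ∀ t : ℝ, (|t| ^ p) ^ (1 / p) = |t| := by
    intro t
    rw [← Real.rpow_mul (abs_nonneg t), mul_one_div, div_self hpne, Real.rpow_one]
  set L : ℝ × ℝ → ℝ := fun z => (|z.1| ^ p + |z.2| ^ p) ^ (1 / p) with hL
  have hLz : ∀ z : ℝ × ℝ, z.2 = 0 → L z = |z.1| := by
    intro z h
    simp only [hL, h, abs_zero, Real.zero_rpow hpne, add_zero, habs]
  have hLnn : ∀ z : ℝ × ℝ, 0 ≤ L z := fun z => Real.rpow_nonneg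
    (add_nonneg (Real.rpow_nonneg (abs_nonneg _) _) (Real.rpow_nonneg (abs_nonneg _) _)) _
  have hNnn : ∀ z : ℝ × ℝ, 0 ≤ Nm z := by
    intro z
    rw [hNm]
    split
    · exact hLnn z
    · positivity
  refine ⟨?_, ?_, ?_⟩
  · intro x
    rw [hNm]
    split
    · rename_i hx2
      have h2 : 0 < |x.2| ^ p := Real.rpow_pos_of_pos (abs_pos.2 hx2) p
      have hs : 0 < (|x.1| ^ p + |x.2| ^ p) ^ (1 / p) :=
        Real.rpow_pos_of_pos (add_pos_of_nonneg_of_pos (Real.rpow_nonneg (abs_nonneg _) _) h2) _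
      constructor
      · intro h; linarith
      · intro h; exact absurd (by rw [h]; rfl) hx2
    · rename_i hx2
      push_neg at hx2
      constructor
      · intro h
        have : |x.1| = 0 := by
          rcases mul_eq_zero.1 h with h' | h'
          · exact absurd h' (ne_of_gt ha0)
          · exact h'
        have h1 : x.1 = 0 := abs_eq_zero.1 this
        exact Prod.ext h1 hx2
      · intro h; rw [h]; simp
  · intro r x
    rcases eq_or_ne r 0 with hr | hr
    · subst hr
      simp only [zero_smul, abs_zero, zero_mul, hNm]
      simp
    · have hsm1 : (r • x).1 = r * x.1 := rfl
      have hsm2 : (r • x).2 = r * x.2 := rfl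
      rw [hNm, hNm, hsm1, hsm2]
      rcases eq_or_ne x.2 0 with hx2 | hx2
      · simp only [hx2, mul_zero, ne_eq, not_true_eq_false, if_false, abs_mul]
        ring
      · have h2 : r * x.2 ≠ 0 := mul_ne_zero hr hx2
        simp only [h2, hx2, ne_eq, not_false_eq_true, if_true]
        rw [abs_mul, abs_mul, Real.mul_rpow (abs_nonneg r) (abs_nonneg x.1),
          Real.mul_rpow (abs_nonneg r) (abs_nonneg x.2), ← mul_add,
          Real.mul_rpow (Real.rpow_nonneg (abs_nonneg r) p)
            (add_nonneg (Real.rpow_nonneg (abs_nonneg _) _) (Real.rpow_nonneg (abs_nonneg _) _)),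
          habs r]
  · intro x y
    have hM1 : (1 : ℝ) ≤ max 1 a := le_max_left 1 a
    have hM2 : (1 : ℝ) ≤ max 1 a⁻¹ := le_max_left 1 a⁻¹
    have claim1 : ∀ z : ℝ × ℝ, Nm z ≤ max 1 a * L z := by
      intro z
      rw [hNm]
      split
      · exact le_mul_of_one_le_left (hLnn z) hM1
      · rename_i h; push_neg at h
        rw [hLz z h]
        exact mul_le_mul_of_nonneg_right (le_max_right 1 a) (abs_nonneg _)
    have claim2 : ∀ z : ℝ × ℝ, L z ≤ max 1 a⁻¹ * Nm z := by
      intro z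
      rw [hNm]
      split
      · exact le_mul_of_one_le_left (hLnn z) hM2
      · rename_i h; push_neg at h
        rw [hLz z h, ← mul_assoc]
        have : (1 : ℝ) ≤ max 1 a⁻¹ * a := by
          rcases le_total a 1 with h' | h'
          · have : a⁻¹ * a = 1 := inv_mul_cancel₀ (ne_of_gt ha0)
            calc (1:ℝ) = a⁻¹ * a := this.symm
              _ ≤ max 1 a⁻¹ * a := mul_le_mul_of_nonneg_right (le_max_right 1 a⁻¹) ha0.le
          · calc (1:ℝ) ≤ a := h'
              _ = 1 * a := (one_mul a).symm
              _ ≤ max 1 a⁻¹ * a := mul_le_mul_of_nonneg_right (le_max_left 1 a⁻¹) ha0.le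
        exact le_mul_of_one_le_left (abs_nonneg _) this
    have hmink : L (x + y) ≤ L x + L y := by
      have h1 : (x + y).1 = x.1 + y.1 := rfl
      have h2 : (x + y).2 = x.2 + y.2 := rfl
      simp only [hL, h1, h2]
      exact mink2 hp x.1 x.2 y.1 y.2
    have hprod : max 1 a * max 1 a⁻¹ = max a a⁻¹ := by
      rcases le_total a 1 with h' | h'
      · have hia : (1:ℝ) ≤ a⁻¹ := one_le_inv_iff₀.2 ⟨ha0, h'⟩
        rw [max_eq_left h', max_eq_right hia, one_mul, max_eq_right (h'.trans hia)]
      · have hia : a⁻¹ ≤ 1 := inv_le_one_of_one_le₀ h'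
        rw [max_eq_right h', max_eq_left hia, mul_one, max_eq_left (hia.trans h')]
    calc Nm (x + y) ≤ max 1 a * L (x + y) := claim1 _
      _ ≤ max 1 a * (L x + L y) := mul_le_mul_of_nonneg_left hmink (le_trans zero_le_one hM1)
      _ ≤ max 1 a * (max 1 a⁻¹ * Nm x + max 1 a⁻¹ * Nm y) :=
          mul_le_mul_of_nonneg_left (add_le_add (claim2 x) (claim2 y))
            (le_trans zero_le_one hM1)
      _ = max 1 a * max 1 a⁻¹ * (Nm x + Nm y) := by ring
      _ = max a a⁻¹ * (Nm x + Nm y) := by rw [hprod]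
end
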